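/- arXiv:1804.08921 — 2 statements merged into one kernel-verified Lean document; each statement's English description precedes it below -/
import Mathlib

section
/- Summing the double series first over m: for complex numbers q, x_1,…,x_M, y_1,…,y_N, a_1,…,a_M, b_1,…,b_N with |q| < 1, |x_i| < 1 and |y_j| < 1 for all i, j, such that (a_i x_i ; q)_n ≠ 0 for all i and all n ∈ ℕ, (x_i ; q)_∞ ≠ 0 for all i, and such that the doubly-indexed family (m,n) ∈ ℕ^M × ℕ^N ↦ ∏_{i=1}^M ((a_i;q)_{m_i}/(q;q)_{m_i}) x_i^{m_i} · ∏_{j=1}^N ((b_j;q)_{n_j}/(q;q)_{n_j}) y_j^{n_j} · q^{|m||n|} is absolutely summable, its sum S equals ∏_{i=1}^M ((a_i x_i;q)_∞/(x_i;q)_∞) · F_{M,N}({x_i},{b_j};{a_i x_i};{y_j}), where in this F the upper parameters are x_1,…,x_M, the b-type parameters are b_1,…,b_N, the lower parameters are a_1 x_1,…,a_M x_M, and the variables are y_1,…,y_N. -/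
open scoped BigOperators

noncomputable def qPoch (q a : ℂ) (n : ℕ) : ℂ :=
  ∏ k ∈ Finset.range n, (1 - q ^ k * a)

noncomputable def qPochInf (q a : ℂ) : ℂ :=
  ∏' k : ℕ, (1 - q ^ k * a)

/-- The generalized `q`-hypergeometric series `F_{N,M}` with upper parameters `a`,
`b`-type parameters `b`, lower parameters `c` and variables `y`. -/
noncomputable def qHyperF (q : ℂ) {N M : ℕ} (a : Fin N → ℂ) (b : Fin M → ℂ)
    (c : Fin N → ℂ) (y : Fin M → ℂ) : ℂ :=
  ∑' m : Fin M → ℕ,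
    (∏ j, qPoch q (a j) (∑ i, m i) / qPoch q (c j) (∑ i, m i)) *
      (∏ i, qPoch q (b i) (m i) / qPoch q q (m i)) * ∏ i, y i ^ m i

open Filter Topology

/-!
Since the family is absolutely summable we may sum over `m` first. For fixed `n` the factor
`q ^ (|m| |n|)` splits as `∏ i, (q ^ |n|) ^ m_i`, so the inner sum factors into one-variable
`q`-binomial series `∑ k, (a;q)_k / (q;q)_k z ^ k = (a z;q)_∞ / (z;q)_∞` at `z = q ^ |n| x_i`.
The splitting `(c;q)_∞ = (c;q)_s (q ^ s c;q)_∞` rewrites each factor as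
`(a_i x_i;q)_∞ / (x_i;q)_∞ · (x_i;q)_|n| / (a_i x_i;q)_|n|`, which produces the `n`-th term of `F`.
The `q`-binomial theorem itself comes from iterating `(1 - z) S(z) = (1 - a z) S(q z)` and letting
`q ^ n z → 0`.
-/

section Summation

lemma Summable.tsum_prod_swap {α β γ : Type*} [AddCommGroup α] [UniformSpace α]
    [IsUniformAddGroup α] [CompleteSpace α] [T0Space α] {f : β × γ → α} (hf : Summable f) :
    ∑' p, f p = ∑' (c) (b), f (b, c) := by
  rw [← (Equiv.prodComm γ β).tsum_eq]
  exact hf.prod_symm.tsum_prod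

variable {β : Type*}

lemma summable_prod_fin_pi_of_nonneg : ∀ {n : ℕ} {f : Fin n → β → ℝ}, (∀ i k, 0 ≤ f i k) →
    (∀ i, Summable (f i)) → Summable fun m : Fin n → β => ∏ i, f i (m i)
  | 0, _, _, _ => .of_finite
  | n + 1, f, h0, hf => by
    rw [← (Fin.consEquiv fun _ => β).summable_iff]
    refine ((hf 0).mul_of_nonneg (summable_prod_fin_pi_of_nonneg (fun i => h0 i.succ)
      (fun i => hf i.succ)) (h0 0) fun m => Finset.prod_nonneg fun i _ => h0 _ _).congr ?_
    intro p
    simp [Fin.prod_univ_succ]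

variable {R : Type*} [NormedCommRing R] [NormOneClass R]

lemma summable_norm_prod_fin_pi {n : ℕ} {f : Fin n → β → R}
    (hf : ∀ i, Summable fun k => ‖f i k‖) : Summable fun m : Fin n → β => ‖∏ i, f i (m i)‖ :=
  (summable_prod_fin_pi_of_nonneg (fun _ _ => norm_nonneg _) hf).of_nonneg_of_le
    (fun _ => norm_nonneg _) fun _ => Finset.norm_prod_le _ _

lemma tsum_prod_fin_pi [CompleteSpace R] :
    ∀ {n : ℕ} {f : Fin n → β → R}, (∀ i, Summable fun k => ‖f i k‖) →
    ∑' m : Fin n → β, ∏ i, f i (m i) = ∏ i, ∑' k, f i k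
  | 0, _, _ => by simp
  | n + 1, f, hf => by
    rw [← (Fin.consEquiv fun _ => β).tsum_eq, Fin.prod_univ_succ,
      ← tsum_prod_fin_pi (fun i => hf i.succ),
      tsum_mul_tsum_of_summable_norm (hf 0) (summable_norm_prod_fin_pi fun i => hf i.succ)]
    simp [Fin.prod_univ_succ]

end Summation

section Pochhammer

variable {q : ℂ}

lemma qPoch_succ (q a : ℂ) (n : ℕ) : qPoch q a (n + 1) = qPoch q a n * (1 - q ^ n * a) :=
  Finset.prod_range_succ _ n

lemma norm_pow_mul_lt_one (hq : ‖q‖ ≤ 1) {c : ℂ} (hc : ‖c‖ < 1) (k : ℕ) : ‖q ^ k * c‖ < 1 := by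
  rw [norm_mul, norm_pow]
  exact (mul_le_of_le_one_left (norm_nonneg c) (pow_le_one₀ (norm_nonneg q) hq)).trans_lt hc

lemma one_sub_pow_mul_ne_zero (hq : ‖q‖ ≤ 1) {c : ℂ} (hc : ‖c‖ < 1) (k : ℕ) :
    1 - q ^ k * c ≠ 0 := fun h => by
  simpa [← sub_eq_zero.1 h] using norm_pow_mul_lt_one hq hc k

lemma qPoch_ne_zero (hq : ‖q‖ ≤ 1) {c : ℂ} (hc : ‖c‖ < 1) (n : ℕ) : qPoch q c n ≠ 0 :=
  Finset.prod_ne_zero_iff.2 fun k _ => one_sub_pow_mul_ne_zero hq hc k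

lemma summable_norm_pow_mul (hq : ‖q‖ < 1) (c : ℂ) : Summable fun k : ℕ => ‖q ^ k * c‖ := by
  simpa [norm_mul] using (summable_geometric_of_lt_one (norm_nonneg q) hq).mul_right ‖c‖

lemma multipliable_one_sub_pow_mul (hq : ‖q‖ < 1) (c : ℂ) :
    Multipliable fun k : ℕ => 1 - q ^ k * c := by
  simpa [sub_eq_add_neg] using
    multipliable_one_add_of_summable (f := fun k : ℕ => -(q ^ k * c))
      (by simpa using summable_norm_pow_mul hq c)

lemma tendsto_qPoch_qPochInf (hq : ‖q‖ < 1) (c : ℂ) :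
    Tendsto (qPoch q c) atTop (𝓝 (qPochInf q c)) :=
  (multipliable_one_sub_pow_mul hq c).hasProd.tendsto_prod_nat

lemma qPochInf_eq_qPoch_mul (hq : ‖q‖ < 1) (c : ℂ) (n : ℕ) :
    qPochInf q c = qPoch q c n * qPochInf q (q ^ n * c) := by
  have shift : ∀ k, 1 - q ^ k * (q ^ n * c) = 1 - q ^ (k + n) * c := fun k => by ring
  rw [qPochInf, qPochInf, tprod_congr shift, qPoch]
  exact (Multipliable.prod_mul_tprod_nat_mul' (f := fun k => 1 - q ^ k * c)
    ((multipliable_one_sub_pow_mul hq (q ^ n * c)).congr shift)).symm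

lemma qPochInf_ne_zero (hq : ‖q‖ < 1) {c : ℂ} (hc : ‖c‖ < 1) : qPochInf q c ≠ 0 := by
  have factor_ne_zero (k : ℕ) : 1 + -(q ^ k * c) ≠ 0 :=
    sub_eq_add_neg (1 : ℂ) _ ▸ one_sub_pow_mul_ne_zero hq.le hc k
  have := tprod_one_add_ne_zero_of_summable factor_ne_zero
    (by simpa using summable_norm_pow_mul hq c)
  simpa only [qPochInf, ← sub_eq_add_neg] using this

end Pochhammer

section QBinomial

variable {q : ℂ}

lemma qPoch_div_qPoch_succ (a : ℂ) (k : ℕ) :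
    qPoch q a (k + 1) / qPoch q q (k + 1)
      = qPoch q a k / qPoch q q k * ((1 - q ^ k * a) / (1 - q ^ (k + 1))) := by
  rw [qPoch_succ, qPoch_succ q q, ← pow_succ, mul_div_mul_comm]

lemma summable_norm_qBinomial (hq : ‖q‖ < 1) (a : ℂ) {z : ℂ} (hz : ‖z‖ < 1) :
    Summable fun k => ‖qPoch q a k / qPoch q q k * z ^ k‖ := by
  have ratio : Tendsto (fun k : ℕ => ‖(1 - q ^ k * a) / (1 - q ^ (k + 1)) * z‖) atTop
      (𝓝 ‖(1 - 0 * a) / (1 - 0) * z‖) := by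
    have hqk := tendsto_pow_atTop_nhds_zero_of_norm_lt_one hq
    refine (((tendsto_const_nhds.sub (hqk.mul_const a)).div
      (tendsto_const_nhds.sub (hqk.comp (tendsto_add_atTop_nat 1))) (by simp)).mul_const z).norm
  simp only [zero_mul, sub_zero, div_one, one_mul] at ratio
  refine summable_of_ratio_norm_eventually_le (r := (1 + ‖z‖) / 2) (by linarith) ?_
  filter_upwards [ratio.eventually_le_const (by linarith : ‖z‖ < (1 + ‖z‖) / 2)] with k hk
  rw [norm_norm, norm_norm, qPoch_div_qPoch_succ, pow_succ z,
    show ∀ c r : ℂ, c * r * (z ^ k * z) = c * z ^ k * (r * z) from fun _ _ => by ring,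
    norm_mul, mul_comm]
  exact mul_le_mul_of_nonneg_right hk (norm_nonneg _)

-- With `c (k + 1) (1 - q ^ (k + 1)) = c k (1 - q ^ k a)` the difference of the two sides telescopes.
lemma qBinomial_functional_eq (hq : ‖q‖ < 1) (a : ℂ) {z : ℂ} (hz : ‖z‖ < 1) :
    (1 - z) * ∑' k, qPoch q a k / qPoch q q k * z ^ k
      = (1 - a * z) * ∑' k, qPoch q a k / qPoch q q k * (q * z) ^ k := by
  set c : ℕ → ℂ := fun k => qPoch q a k / qPoch q q k with hc
  have hqz : ‖q * z‖ < 1 := by simpa using norm_pow_mul_lt_one hq.le hz 1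
  have hS := (summable_norm_qBinomial hq a hz).of_norm.hasSum
  have hSq := (summable_norm_qBinomial hq a hqz).of_norm.hasSum
  set t : ℕ → ℂ := fun k => c k * z ^ k - c k * (q * z) ^ k
  have shift : (fun k => t (k + 1)) = fun k => z * (c k * z ^ k - a * (c k * (q * z) ^ k)) := by
    funext k
    have hk : 1 - q ^ (k + 1) ≠ 0 := pow_succ q k ▸ one_sub_pow_mul_ne_zero hq.le hq k
    simp only [t, hc, qPoch_div_qPoch_succ]
    field_simp
    ring
  have htail := (hasSum_nat_add_iff' 1).2 (hS.sub hSq)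
  rw [shift, Finset.sum_range_one] at htail
  have key := htail.unique ((hS.sub (hSq.mul_left a)).mul_left z)
  simp only [pow_zero, mul_one, sub_self, sub_zero] at key
  linear_combination key

lemma tendsto_tsum_qBinomial_pow_mul (hq : ‖q‖ < 1) (a : ℂ) {z : ℂ} (hz : ‖z‖ < 1) :
    Tendsto (fun n : ℕ => ∑' k, qPoch q a k / qPoch q q k * (q ^ n * z) ^ k) atTop (𝓝 1) := by
  have hlim : (∑' k, qPoch q a k / qPoch q q k * (0 : ℂ) ^ k) = 1 := by
    rw [tsum_eq_single 0 fun k hk => by simp [zero_pow hk]]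
    simp [qPoch]
  rw [← hlim]
  refine tendsto_tsum_of_dominated_convergence (summable_norm_qBinomial hq a hz) (fun k => ?_)
    (Eventually.of_forall fun n k => ?_)
  · have hqn : Tendsto (fun n : ℕ => q ^ n * z) atTop (𝓝 0) := by
      simpa using (tendsto_pow_atTop_nhds_zero_of_norm_lt_one hq).mul_const z
    exact (hqn.pow k).const_mul _
  · rw [norm_mul, norm_mul, norm_pow, norm_pow]
    gcongr
    rw [norm_mul, norm_pow]
    exact mul_le_of_le_one_left (norm_nonneg z) (pow_le_one₀ (norm_nonneg q) hq.le)

theorem tsum_qBinomial (hq : ‖q‖ < 1) (a : ℂ) {z : ℂ} (hz : ‖z‖ < 1) :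
    ∑' k, qPoch q a k / qPoch q q k * z ^ k = qPochInf q (a * z) / qPochInf q z := by
  set S : ℂ → ℂ := fun w => ∑' k, qPoch q a k / qPoch q q k * w ^ k
  have iterate (n : ℕ) : S z * qPoch q z n = qPoch q (a * z) n * S (q ^ n * z) := by
    induction n with
    | zero => simp [qPoch]
    | succ n ih =>
      have hfe := qBinomial_functional_eq hq a (norm_pow_mul_lt_one hq.le hz n)
      rw [show q * (q ^ n * z) = q ^ (n + 1) * z by ring,
        show a * (q ^ n * z) = q ^ n * (a * z) by ring] at hfe
      rw [qPoch_succ, qPoch_succ, ← mul_assoc, ih, mul_assoc, mul_comm (S _), hfe]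
      ring
  have hlim : Tendsto (fun n => S z * qPoch q z n) atTop (𝓝 (qPochInf q (a * z) * 1)) := by
    simp_rw [iterate]
    exact (tendsto_qPoch_qPochInf hq _).mul (tendsto_tsum_qBinomial_pow_mul hq a hz)
  rw [eq_div_iff (qPochInf_ne_zero hq hz), ← mul_one (qPochInf q (a * z))]
  exact tendsto_nhds_unique ((tendsto_qPoch_qPochInf hq z).const_mul (S z)) hlim

lemma tsum_qBinomial_pow_mul (hq : ‖q‖ < 1) (a : ℂ) {x : ℂ} (hx : ‖x‖ < 1) {s : ℕ}
    (hax : qPoch q (a * x) s ≠ 0) :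
    ∑' k, qPoch q a k / qPoch q q k * (q ^ s * x) ^ k
      = qPochInf q (a * x) / qPochInf q x * (qPoch q x s / qPoch q (a * x) s) := by
  rw [tsum_qBinomial hq a (norm_pow_mul_lt_one hq.le hx s), qPochInf_eq_qPoch_mul hq (a * x) s,
    qPochInf_eq_qPoch_mul hq x s, mul_left_comm a]
  field_simp [qPoch_ne_zero hq.le hx s]

lemma tsum_prod_qBinomial_mul_pow {M : ℕ} (hq : ‖q‖ < 1) {x a : Fin M → ℂ}
    (hx : ∀ i, ‖x i‖ < 1) {s : ℕ} (hax : ∀ i, qPoch q (a i * x i) s ≠ 0) :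
    ∑' m : Fin M → ℕ,
        (∏ i, qPoch q (a i) (m i) / qPoch q q (m i) * x i ^ m i) * q ^ ((∑ i, m i) * s)
      = (∏ i, qPochInf q (a i * x i) / qPochInf q (x i)) *
          ∏ i, qPoch q (x i) s / qPoch q (a i * x i) s := by
  have hterm (m : Fin M → ℕ) :
      (∏ i, qPoch q (a i) (m i) / qPoch q q (m i) * x i ^ m i) * q ^ ((∑ i, m i) * s)
        = ∏ i, qPoch q (a i) (m i) / qPoch q q (m i) * (q ^ s * x i) ^ m i := by
    rw [mul_comm _ s, pow_mul, ← Finset.prod_pow_eq_pow_sum, ← Finset.prod_mul_distrib]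
    exact Finset.prod_congr rfl fun i _ => by ring
  rw [tsum_congr hterm, ← Finset.prod_mul_distrib, tsum_prod_fin_pi fun i =>
    summable_norm_qBinomial hq (a i) (norm_pow_mul_lt_one hq.le (hx i) s)]
  exact Finset.prod_congr rfl fun i _ => tsum_qBinomial_pow_mul hq (a i) (hx i) (hax i)

end QBinomial

theorem statement1_general (M N : ℕ) (q : ℂ) (x a : Fin M → ℂ) (y b : Fin N → ℂ)
    (hq : ‖q‖ < 1)
    (hx : ∀ i, ‖x i‖ < 1)
    (hax : ∀ i n, qPoch q (a i * x i) n ≠ 0)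
    (hsum : Summable (fun p : (Fin M → ℕ) × (Fin N → ℕ) =>
      ‖((∏ i, qPoch q (a i) (p.1 i) / qPoch q q (p.1 i) * x i ^ p.1 i) *
        (∏ j, qPoch q (b j) (p.2 j) / qPoch q q (p.2 j) * y j ^ p.2 j) *
        q ^ ((∑ i, p.1 i) * (∑ j, p.2 j)))‖)) :
    (∑' p : (Fin M → ℕ) × (Fin N → ℕ),
        (∏ i, qPoch q (a i) (p.1 i) / qPoch q q (p.1 i) * x i ^ p.1 i) *
          (∏ j, qPoch q (b j) (p.2 j) / qPoch q q (p.2 j) * y j ^ p.2 j) *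
          q ^ ((∑ i, p.1 i) * (∑ j, p.2 j)))
      = (∏ i, qPochInf q (a i * x i) / qPochInf q (x i)) *
        qHyperF q x b (fun i => a i * x i) y := by
  rw [hsum.of_norm.tsum_prod_swap, qHyperF, ← tsum_mul_left]
  refine tsum_congr fun n => ?_
  calc _ = (∑' m : Fin M → ℕ, (∏ i, qPoch q (a i) (m i) / qPoch q q (m i) * x i ^ m i) *
          q ^ ((∑ i, m i) * ∑ j, n j)) *
        ∏ j, qPoch q (b j) (n j) / qPoch q q (n j) * y j ^ n j := by
        rw [← tsum_mul_right]
        exact tsum_congr fun m => by ring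
    _ = _ := by
        rw [tsum_prod_qBinomial_mul_pow hq hx fun i => hax i _, Finset.prod_mul_distrib]
        ring

theorem statement1 (M N : ℕ) (q : ℂ) (x a : Fin M → ℂ) (y b : Fin N → ℂ)
    (hq : ‖q‖ < 1)
    (hx : ∀ i, ‖x i‖ < 1) (hy : ∀ j, ‖y j‖ < 1)
    (hax : ∀ i n, qPoch q (a i * x i) n ≠ 0)
    (hxinf : ∀ i, qPochInf q (x i) ≠ 0)
    (hsum : Summable (fun p : (Fin M → ℕ) × (Fin N → ℕ) =>
      ‖((∏ i, qPoch q (a i) (p.1 i) / qPoch q q (p.1 i) * x i ^ p.1 i) *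
        (∏ j, qPoch q (b j) (p.2 j) / qPoch q q (p.2 j) * y j ^ p.2 j) *
        q ^ ((∑ i, p.1 i) * (∑ j, p.2 j)))‖)) :
    (∑' p : (Fin M → ℕ) × (Fin N → ℕ),
        (∏ i, qPoch q (a i) (p.1 i) / qPoch q q (p.1 i) * x i ^ p.1 i) *
          (∏ j, qPoch q (b j) (p.2 j) / qPoch q q (p.2 j) * y j ^ p.2 j) *
          q ^ ((∑ i, p.1 i) * (∑ j, p.2 j)))
      = (∏ i, qPochInf q (a i * x i) / qPochInf q (x i)) *
        qHyperF q x b (fun i => a i * x i) y :=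
  statement1_general M N q x a y b hq hx hax hsum
end

section
/- Action of the exchange operator σ_i on p_{1,i+1} (second component of Proposition 3.1): let K be a field (e.g. ℂ), let u, x_0, x_1, …, x_M, a_1, …, a_M ∈ K, fix 1 ≤ i ≤ M−1, and assume 1 − a_k x_k u ≠ 0 for 1 ≤ k ≤ i+1 and x_i − a_{i+1} x_{i+1} ≠ 0. Define p_{1,k}(u) = ((1 − x_0 u)/(1 − a_k x_k u)) · ∏_{l=1}^{k-1} (1 − x_l u)/(1 − a_l x_l u). Then the function obtained from p_{1,i+1} by exchanging (x_i, a_i) with (x_{i+1}, a_{i+1}), namely σ_i(p_{1,i+1})(u) = ((1 − x_0 u)(1 − x_{i+1} u)/((1 − a_i x_i u)(1 − a_{i+1} x_{i+1} u))) · ∏_{l=1}^{i-1} (1 − x_l u)/(1 − a_l x_l u), satisfies (x_i − a_{i+1} x_{i+1}) · σ_i(p_{1,i+1})(u) = (x_i − x_{i+1}) · p_{1,i}(u) + (1 − a_{i+1}) x_{i+1} · p_{1,i+1}(u). -/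
open scoped BigOperators

/-- The rational function `p_{1,k}(u) = ((1 - x_0 u)/(1 - a_k x_k u)) ·
∏_{l=1}^{k-1} (1 - x_l u)/(1 - a_l x_l u)`. -/
def pOne {K : Type*} [Field K] (x a : ℕ → K) (k : ℕ) (u : K) : K :=
  (1 - x 0 * u) / (1 - a k * x k * u) *
    ∏ l ∈ Finset.Ico 1 k, (1 - x l * u) / (1 - a l * x l * u)

/-! After removing the common factor `(1 - x_0 u) ∏_{l<i} (1 - x_l u)/(1 - a_l x_l u)`, the
relation is the polynomial identity `(y - c z)(1 - z u) = (y - z)(1 - c z u) + (1 - c) z (1 - y u)`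
divided by `(1 - a_i x_i u)(1 - c z u)`, with `y = x_i`, `z = x_{i+1}`, `c = a_{i+1}`. -/

theorem pOne_succ {K : Type*} [Field K] (x a : ℕ → K) (u : K) {k : ℕ} (hk : 1 ≤ k) :
    pOne x a (k + 1) u =
      (1 - x 0 * u) / (1 - a (k + 1) * x (k + 1) * u) * ((1 - x k * u) / (1 - a k * x k * u)) *
        ∏ l ∈ Finset.Ico 1 k, (1 - x l * u) / (1 - a l * x l * u) := by
  rw [pOne, Finset.prod_Ico_succ_top hk]
  ring

theorem exchange_relation {K : Type*} [Field K] {y z c u : K} (B w : K)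
    (hC : 1 - c * z * u ≠ 0) :
    (y - c * z) * (w * (1 - z * u) / (B * (1 - c * z * u))) =
      (y - z) * (w / B) + (1 - c) * z * (w / (1 - c * z * u) * ((1 - y * u) / B)) := by
  have hpoly : (y - c * z) * (1 - z * u) = (y - z) * (1 - c * z * u) + (1 - c) * z * (1 - y * u) := by
    ring
  have hCinv : (1 - c * z * u) * (1 - c * z * u)⁻¹ = 1 := mul_inv_cancel₀ hC
  simp only [div_eq_mul_inv, mul_inv]
  linear_combination (w * B⁻¹ * (1 - c * z * u)⁻¹) * hpoly + (y - z) * w * B⁻¹ * hCinv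

theorem statement8_general {K : Type*} [Field K] (u : K) (x a : ℕ → K)
    (i : ℕ) (hi1 : 1 ≤ i)
    (hden : ∀ k, 1 ≤ k → k ≤ i + 1 → 1 - a k * x k * u ≠ 0) :
    (x i - a (i + 1) * x (i + 1)) *
        ((1 - x 0 * u) * (1 - x (i + 1) * u) /
            ((1 - a i * x i * u) * (1 - a (i + 1) * x (i + 1) * u)) *
          ∏ l ∈ Finset.Ico 1 i, (1 - x l * u) / (1 - a l * x l * u))
      = (x i - x (i + 1)) * pOne x a i u +
        (1 - a (i + 1)) * x (i + 1) * pOne x a (i + 1) u := by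
  rw [pOne_succ x a u hi1, pOne]
  linear_combination (∏ l ∈ Finset.Ico 1 i, (1 - x l * u) / (1 - a l * x l * u)) *
    exchange_relation (1 - a i * x i * u) (1 - x 0 * u) (hden (i + 1) (by omega) le_rfl)

theorem statement8 {K : Type*} [Field K] (M : ℕ) (u : K) (x a : ℕ → K)
    (i : ℕ) (hi1 : 1 ≤ i) (hiM : i + 1 ≤ M)
    (hden : ∀ k, 1 ≤ k → k ≤ i + 1 → 1 - a k * x k * u ≠ 0)
    (hx : x i - a (i + 1) * x (i + 1) ≠ 0) :
    (x i - a (i + 1) * x (i + 1)) *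
        ((1 - x 0 * u) * (1 - x (i + 1) * u) /
            ((1 - a i * x i * u) * (1 - a (i + 1) * x (i + 1) * u)) *
          ∏ l ∈ Finset.Ico 1 i, (1 - x l * u) / (1 - a l * x l * u))
      = (x i - x (i + 1)) * pOne x a i u +
        (1 - a (i + 1)) * x (i + 1) * pOne x a (i + 1) u :=
  statement8_general u x a i hi1 hden
end
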